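/- arXiv:2410.16340 — 2 statements merged into one kernel-verified Lean document; each statement's English description precedes it below -/
import Mathlib

section
/- Fix θ ∈ ℝ^d with θ ≠ 0 and assume μ({ω ∈ S^{d−1} : ω^⊤θ = 0}) = 0 and μ({ω ∈ S^{d−1} : ω^⊤θ* = 0}) = 0. Then lim_{z→∞} P( σ(h^⊤θ)·‖h‖ > z and h^⊤θ < 0 | ‖h‖ > z ) = ν({ω ∈ S^{d−1} : ω^⊤θ > 0}). -/
/-!
In the tail the label is asymptotically the sign of `⟪x/‖x‖, θ*⟫`: given `x`, it is `1` with
probability at least `1 - exp (-‖x‖ δ)` when `⟪x/‖x‖, θ*⟫ > δ`, and `-1` with the same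
probability when `⟪x/‖x‖, θ*⟫ < -δ`. The two resulting lower bounds add up to the angular limit
`μ`, so both are sharp: the joint tail of direction and label converges to `μ` split along the sign
of `⟪ω, θ*⟫`.

The event `σ(h^⊤θ)‖h‖ > z, h^⊤θ < 0` lies between `{h^⊤θ < 0, ‖h‖ > z}` and, since `σ(u) → 1`
as `u → -∞`, `{⟪h/‖h‖, θ⟫ < -c, ‖h‖ > (1 + η) z}`. The outer set has limit `ν{⟪ω, θ⟫ > 0}`;
the inner one, after regular variation rescales `(1 + η) z` to `z`, has limit `(1 + η)^(-α)` times
the same mass with margin `c`, and letting `c, η → 0` closes the gap. The thresholds `δ` and `c`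
avoid the countably many atoms of `⟪·, θ*⟫` and `⟪·, θ⟫` under `μ`, so that every set involved is a
`μ`-continuity set.
-/

open MeasureTheory ProbabilityTheory Filter Topology Set

/-- The logistic function `σ(u) = e^{-u}/(1+e^{-u})`. -/
noncomputable def logisticSigma (u : ℝ) : ℝ := Real.exp (-u) / (1 + Real.exp (-u))

/-- The stochastic gradient of the ℓ2-regularized logistic loss,
`∇ℓ(θ,x,y) = -σ(h^⊤θ) • h + λ • θ` with `h = y • x`. -/
noncomputable def logisticGrad {d : ℕ} (θ : EuclideanSpace ℝ (Fin d)) (lam : ℝ)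
    (xv : EuclideanSpace ℝ (Fin d)) (yv : ℝ) : EuclideanSpace ℝ (Fin d) :=
  (-(logisticSigma (inner ℝ (yv • xv) θ : ℝ))) • (yv • xv) + lam • θ

/-- The measure `ν(A) = μ((-A) ∩ {ω : ω^⊤θ* > 0}) + μ(A ∩ {ω : ω^⊤θ* < 0})`. -/
noncomputable def nuMeas {d : ℕ} (μ : Measure (EuclideanSpace ℝ (Fin d)))
    (θstar : EuclideanSpace ℝ (Fin d)) (A : Set (EuclideanSpace ℝ (Fin d))) : ENNReal :=
  μ ((fun v => -v) ⁻¹' A ∩ {v | 0 < (inner ℝ v θstar : ℝ)}) +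
    μ (A ∩ {v | (inner ℝ v θstar : ℝ) < 0})

open scoped RealInnerProductSpace

lemma logisticSigma_eq_one_div (u : ℝ) : logisticSigma u = 1 / (1 + Real.exp u) := by
  rw [logisticSigma, Real.exp_neg]
  field_simp
  ring

lemma logisticSigma_antitone : Antitone logisticSigma := fun u v huv => by
  simp only [logisticSigma_eq_one_div]
  gcongr

lemma one_sub_exp_neg_le_one_div_one_add_exp_neg (u : ℝ) :
    1 - Real.exp (-u) ≤ 1 / (1 + Real.exp (-u)) := by
  have h := Real.exp_pos (-u)
  rw [le_div_iff₀ (by positivity)]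
  nlinarith

lemma one_sub_one_div_one_add_exp_neg (u : ℝ) :
    1 - 1 / (1 + Real.exp (-u)) = 1 / (1 + Real.exp u) := by
  rw [Real.exp_neg]
  field_simp
  ring

lemma tendsto_of_tendsto_add_of_forall_lt {α : Type*} {l : Filter α} {f g : α → ℝ} {a b : ℝ}
    (hfg : Tendsto (fun t => f t + g t) l (𝓝 (a + b)))
    (hf : ∀ a' < a, ∀ᶠ t in l, a' < f t) (hg : ∀ b' < b, ∀ᶠ t in l, b' < g t) :
    Tendsto f l (𝓝 a) := by
  refine tendsto_order.2 ⟨hf, fun a' ha' => ?_⟩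
  filter_upwards [hfg.eventually_lt_const (by linarith : a + b < a + b + (a' - a) / 2),
    hg (b - (a' - a) / 2) (by linarith)] with t hsum hgt
  linarith

lemma tendsto_measure_inter_lt_nhdsGT {α : Type*} [MeasurableSpace α] (μ : Measure α)
    (S : Set α) (F : α → ℝ) (a : ℝ) :
    Tendsto (fun c => μ (S ∩ {v | c < F v})) (𝓝[>] a) (𝓝 (μ (S ∩ {v | a < F v}))) := by
  have : (atBot : Filter (Ioi a)).IsCountablyGenerated := by
    rw [← comap_coe_Ioi_nhdsGT a]; infer_instance
  have hU : S ∩ {v | a < F v} = ⋃ c : Ioi a, S ∩ {v | (c : ℝ) < F v} := by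
    ext v
    simp only [mem_inter_iff, mem_ofPred_eq, mem_iUnion, Subtype.exists, mem_Ioi, exists_prop]
    refine ⟨fun ⟨hS, hv⟩ => ?_, fun ⟨c, hac, hS, hcv⟩ => ⟨hS, hac.trans hcv⟩⟩
    obtain ⟨c, hac, hcv⟩ := exists_between hv
    exact ⟨c, hac, hS, hcv⟩
  rw [← map_coe_Ioi_atBot a, tendsto_map'_iff, hU]
  exact tendsto_measure_iUnion_atBot fun c c' hcc' => inter_subset_inter_right S
    fun v (hv : (c' : ℝ) < F v) => (show (c : ℝ) ≤ c' from hcc').trans_lt hv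

lemma Filter.Eventually.frequently_nhdsGT_of_cocountable {p : ℝ → Prop}
    (hp : ∀ᶠ c in cocountable, p c) (a : ℝ) : ∃ᶠ c in 𝓝[>] a, p c := by
  rw [(nhdsGT_basis a).frequently_iff]
  intro b hab
  obtain ⟨c, hc, hac, hcb⟩ := (mem_cocountable.1 hp).dense_compl ℝ |>.exists_between hab
  exact ⟨c, ⟨hac, hcb⟩, by simpa using hc⟩

lemma eventually_cocountable_measure_eq_zero {α : Type*} [MeasurableSpace α] {μ : Measure α}
    [SFinite μ] {F : α → ℝ} (hF : Measurable F) :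
    ∀ᶠ c in cocountable, μ {v | F v = c} = 0 := by
  rw [Filter.Eventually, mem_cocountable]
  simpa [compl_ofPred, pos_iff_ne_zero] using Measure.countable_meas_level_set_pos (μ := μ) hF

lemma measure_frontier_inter_eq_zero {α : Type*} [TopologicalSpace α] [MeasurableSpace α]
    {μ : Measure α} {A B : Set α} (hA : μ (frontier A) = 0) (hB : μ (frontier B) = 0) :
    μ (frontier (A ∩ B)) = 0 :=
  measure_mono_null ((frontier_inter_subset _ _).trans
    (union_subset_union inter_subset_left inter_subset_right)) (measure_union_null hA hB)

lemma measure_frontier_setOf_lt_eq_zero {α : Type*} [TopologicalSpace α] [MeasurableSpace α]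
    {μ : Measure α} {F : α → ℝ} (hF : Continuous F) {c : ℝ} (hc : μ {v | F v = c} = 0) :
    μ (frontier {v | c < F v}) = 0 :=
  measure_mono_null (fun _ hv => (frontier_lt_subset_eq continuous_const hF hv).symm) hc

lemma measure_eq_inter_pos_add_inter_neg {α : Type*} [MeasurableSpace α] {μ : Measure α}
    {F : α → ℝ} (hF : Measurable F) (h0 : μ {v | F v = 0} = 0) (A : Set α) :
    μ A = μ (A ∩ {v | 0 < F v}) + μ (A ∩ {v | F v < 0}) := by
  have hdiff : μ (A \ {v | 0 < F v}) = μ (A ∩ {v | F v < 0}) := by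
    refine measure_congr (eventuallyEq_set.2 ?_)
    filter_upwards [measure_eq_zero_iff_ae_notMem.1 h0] with v hv
    simp only [Set.mem_sdiff, mem_inter_iff, mem_ofPred_eq, not_lt] at hv ⊢
    exact and_congr_right fun _ => ⟨fun h => lt_of_le_of_ne h hv, le_of_lt⟩
  rw [← hdiff, measure_inter_add_sdiff _ (measurableSet_lt measurable_const hF)]

lemma measureReal_eq_add_of_ae_eq_one_or_neg_one {Ω : Type*} [MeasurableSpace Ω]
    {P : Measure Ω} [IsFiniteMeasure P] {y : Ω → ℝ} (hym : Measurable y)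
    (hy : ∀ᵐ ω ∂P, y ω = 1 ∨ y ω = -1) (S : Set Ω) :
    (P S).toReal = (P ({ω | y ω = 1} ∩ S)).toReal + (P ({ω | y ω = -1} ∩ S)).toReal := by
  have hdiff : P (S \ {ω | y ω = 1}) = P ({ω | y ω = -1} ∩ S) := by
    refine measure_congr (eventuallyEq_set.2 ?_)
    filter_upwards [hy] with ω hω
    rcases hω with h | h <;> norm_num [h]
  rw [← measure_inter_add_sdiff (t := {ω | y ω = 1}) S (hym (measurableSet_singleton 1)),
    hdiff, inter_comm, ENNReal.toReal_add (measure_ne_top _ _) (measure_ne_top _ _)]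

lemma inner_eq_norm_mul_inner_smul {E : Type*} [NormedAddCommGroup E] [InnerProductSpace ℝ E]
    (v θ : E) : ⟪v, θ⟫ = ‖v‖ * ⟪‖v‖⁻¹ • v, θ⟫ := by
  rcases eq_or_ne v 0 with rfl | hv
  · simp
  · rw [real_inner_smul_left, mul_inv_cancel_left₀ (norm_ne_zero_iff.2 hv)]

section TailFractions

variable {Ω E : Type*} [MeasurableSpace Ω] [Norm E] {P : Measure Ω} [IsFiniteMeasure P]
  {x : Ω → E}

noncomputable def tailFrac (P : Measure Ω) (x : Ω → E) (S : Set Ω) (z : ℝ) : ℝ :=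
  (P S).toReal / (P {ω | ‖x ω‖ > z}).toReal

lemma tailFrac_mono {S S' : Set Ω} (h : S ⊆ S') (z : ℝ) : tailFrac P x S z ≤ tailFrac P x S' z :=
  div_le_div_of_nonneg_right (measureReal_mono h) ENNReal.toReal_nonneg

lemma tailFrac_union {S S' : Set Ω} (h : Disjoint S S') (hS' : MeasurableSet S') (z : ℝ) :
    tailFrac P x (S ∪ S') z = tailFrac P x S z + tailFrac P x S' z := by
  rw [tailFrac, measure_union h hS', ENNReal.toReal_add (measure_ne_top _ _) (measure_ne_top _ _),
    add_div]
  rfl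

lemma tailFrac_mul_div {S : Set Ω} {z z' : ℝ} (hS : S ⊆ {ω | ‖x ω‖ > z'}) :
    tailFrac P x S z' * ((P {ω | ‖x ω‖ > z'}).toReal / (P {ω | ‖x ω‖ > z}).toReal) =
      tailFrac P x S z := by
  by_cases h0 : (P {ω | ‖x ω‖ > z'}).toReal = 0
  · have hS0 : (P S).toReal = 0 := le_antisymm (h0 ▸ measureReal_mono hS) ENNReal.toReal_nonneg
    simp [tailFrac, hS0]
  · rw [tailFrac, tailFrac, div_mul_div_cancel₀ h0]

lemma tendsto_tailFrac_comp_const_mul {S : ℝ → Set Ω} (hS : ∀ z, S z ⊆ {ω | ‖x ω‖ > z})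
    {m t α : ℝ} (ht : 0 < t) (hSm : Tendsto (fun z => tailFrac P x (S z) z) atTop (𝓝 m))
    (hreg : Tendsto (fun z => (P {ω | ‖x ω‖ > t * z}).toReal / (P {ω | ‖x ω‖ > z}).toReal)
      atTop (𝓝 (t ^ (-α)))) :
    Tendsto (fun z => tailFrac P x (S (t * z)) z) atTop (𝓝 (m * t ^ (-α))) :=
  ((hSm.comp (tendsto_id.const_mul_atTop ht)).mul hreg).congr fun _ => tailFrac_mul_div (hS _)

end TailFractions

section DirectionalTails

variable {Ω E : Type*} [NormedAddCommGroup E] [InnerProductSpace ℝ E]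

def dirTail (x : Ω → E) (A : Set E) (z : ℝ) : Set Ω :=
  {ω | ‖x ω‖⁻¹ • x ω ∈ A} ∩ {ω | ‖x ω‖ > z}

lemma dirTail_eq_preimage (x : Ω → E) (A : Set E) (z : ℝ) :
    dirTail x A z = x ⁻¹' dirTail id A z := rfl

lemma dirTail_mono {x : Ω → E} {A B : Set E} (h : A ⊆ B) (z : ℝ) :
    dirTail x A z ⊆ dirTail x B z :=
  inter_subset_inter_left _ fun _ hω => h hω

variable [MeasurableSpace Ω] [MeasurableSpace E]

def HasSpectralMeasure (P : Measure Ω) (x : Ω → E) (μ : Measure E) : Prop :=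
  ∀ A, MeasurableSet A → μ (frontier A) = 0 →
    Tendsto (fun z => tailFrac P x (dirTail x A z) z) atTop (𝓝 (μ A).toReal)

def HasLogisticCondProb (P : Measure Ω) (x : Ω → E) (L : Set Ω) (θ : E) : Prop :=
  ∀ S, MeasurableSet S →
    (P (L ∩ x ⁻¹' S)).toReal = ∫ ω in x ⁻¹' S, 1 / (1 + Real.exp (-⟪x ω, θ⟫)) ∂P

variable {P : Measure Ω} {x : Ω → E}

lemma measurableSet_dirTail [BorelSpace E] (hx : Measurable x) {A : Set E} (hA : MeasurableSet A)
    (z : ℝ) : MeasurableSet (dirTail x A z) :=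
  ((hx.norm.inv.smul hx) hA).inter (measurableSet_lt measurable_const hx.norm)

variable [IsFiniteMeasure P] [BorelSpace E]

lemma integrable_one_div_one_add_exp_neg_inner (hx : Measurable x) (θ : E) :
    Integrable (fun ω => 1 / (1 + Real.exp (-⟪x ω, θ⟫))) P := by
  refine Integrable.of_bound (Measurable.aestronglyMeasurable (by fun_prop)) 1
    (Eventually.of_forall fun ω => ?_)
  rw [Real.norm_of_nonneg (by positivity), div_le_one (by positivity)]
  linarith [Real.exp_pos (-⟪x ω, θ⟫)]

lemma HasLogisticCondProb.label_neg_one {y : Ω → ℝ} {θ : E}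
    (h : HasLogisticCondProb P x {ω | y ω = 1} θ) (hx : Measurable x) (hym : Measurable y)
    (hy : ∀ᵐ ω ∂P, y ω = 1 ∨ y ω = -1) : HasLogisticCondProb P x {ω | y ω = -1} (-θ) := by
  intro S hS
  have hsplit := measureReal_eq_add_of_ae_eq_one_or_neg_one hym hy (x ⁻¹' S)
  rw [h S hS] at hsplit
  have hcompl (ω : Ω) :
      1 / (1 + Real.exp (-⟪x ω, -θ⟫)) = 1 - 1 / (1 + Real.exp (-⟪x ω, θ⟫)) := by
    rw [inner_neg_right, neg_neg, one_sub_one_div_one_add_exp_neg]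
  simp only [hcompl]
  rw [integral_sub (integrable_const _)
    (integrable_one_div_one_add_exp_neg_inner hx θ).integrableOn, setIntegral_const, smul_eq_mul, mul_one, measureReal_def]
  linarith

lemma HasLogisticCondProb.one_sub_exp_mul_le {L : Set Ω} {θ : E}
    (h : HasLogisticCondProb P x L θ) (hx : Measurable x) {A : Set E} (hA : MeasurableSet A)
    {δ z : ℝ} (hδ : 0 ≤ δ) (hAδ : A ⊆ {v | δ < ⟪v, θ⟫}) :
    (1 - Real.exp (-(z * δ))) * (P (dirTail x A z)).toReal ≤
      (P (L ∩ dirTail x A z)).toReal := by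
  rw [dirTail_eq_preimage, h _ (measurableSet_dirTail measurable_id hA z)]
  refine setIntegral_ge_of_const_le_real (measurableSet_dirTail hx hA z) (measure_ne_top _ _)
    (fun ω ⟨hωA, hωz⟩ => ?_) (integrable_one_div_one_add_exp_neg_inner hx θ).integrableOn
  have hzδ : z * δ ≤ ⟪x ω, θ⟫ := by
    rw [inner_eq_norm_mul_inner_smul]
    exact mul_le_mul (le_of_lt hωz) (hAδ hωA).le hδ (norm_nonneg _)
  calc 1 - Real.exp (-(z * δ)) ≤ 1 - Real.exp (-⟪x ω, θ⟫) := by gcongr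
    _ ≤ _ := one_sub_exp_neg_le_one_div_one_add_exp_neg _

variable {μ : Measure E} [IsFiniteMeasure μ]

lemma HasLogisticCondProb.eventually_lt_tailFrac {L : Set Ω} {θ : E}
    (h : HasLogisticCondProb P x L θ) (hx : Measurable x) (hμ : HasSpectralMeasure P x μ)
    {A : Set E} (hA : MeasurableSet A) (hfA : μ (frontier A) = 0) {a : ℝ}
    (ha : a < (μ (A ∩ {v | 0 < ⟪v, θ⟫})).toReal) :
    ∀ᶠ z in atTop, a < tailFrac P x (L ∩ dirTail x A z) z := by
  have hθ : Continuous fun v : E => ⟪v, θ⟫ := by fun_prop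
  obtain ⟨δ, hδμ, hδa, hδ⟩ : ∃ δ, μ {v | ⟪v, θ⟫ = δ} = 0 ∧
      a < (μ (A ∩ {v | δ < ⟪v, θ⟫})).toReal ∧ 0 < δ :=
    ((eventually_cocountable_measure_eq_zero hθ.measurable).frequently_nhdsGT_of_cocountable 0
      |>.and_eventually <|
        (((ENNReal.tendsto_toReal (measure_ne_top _ _)).comp
          (tendsto_measure_inter_lt_nhdsGT μ A _ 0)).eventually_const_lt ha).and
        self_mem_nhdsWithin).exists
  set A₁ := A ∩ {v | δ < ⟪v, θ⟫}
  have hA₁ : MeasurableSet A₁ := hA.inter (measurableSet_lt measurable_const hθ.measurable)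
  have hexp : Tendsto (fun z => Real.exp (-(z * δ))) atTop (𝓝 0) :=
    Real.tendsto_exp_neg_atTop_nhds_zero.comp (tendsto_id.atTop_mul_const hδ)
  have hlim : Tendsto (fun z => (1 - Real.exp (-(z * δ))) * tailFrac P x (dirTail x A₁ z) z)
      atTop (𝓝 ((1 - 0) * (μ A₁).toReal)) :=
    (hexp.const_sub 1).mul <| hμ A₁ hA₁ <|
      measure_frontier_inter_eq_zero hfA (measure_frontier_setOf_lt_eq_zero hθ hδμ)
  rw [sub_zero, one_mul] at hlim
  filter_upwards [hlim.eventually_const_lt hδa] with z hz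
  calc a < (1 - Real.exp (-(z * δ))) * tailFrac P x (dirTail x A₁ z) z := hz
    _ ≤ tailFrac P x (L ∩ dirTail x A₁ z) z := by
      rw [tailFrac, tailFrac, ← mul_div_assoc]
      gcongr
      exact h.one_sub_exp_mul_le hx hA₁ hδ.le inter_subset_right
    _ ≤ tailFrac P x (L ∩ dirTail x A z) z :=
      tailFrac_mono (inter_subset_inter_right _ (dirTail_mono inter_subset_left z)) z

lemma tendsto_tailFrac_label {y : Ω → ℝ} {θ : E} (hx : Measurable x) (hym : Measurable y)
    (hy : ∀ᵐ ω ∂P, y ω = 1 ∨ y ω = -1) (h : HasLogisticCondProb P x {ω | y ω = 1} θ)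
    (hμ : HasSpectralMeasure P x μ) (hμθ : μ {v | ⟪v, θ⟫ = 0} = 0) {A : Set E}
    (hA : MeasurableSet A) (hfA : μ (frontier A) = 0) :
    Tendsto (fun z => tailFrac P x ({ω | y ω = 1} ∩ dirTail x A z) z) atTop
        (𝓝 (μ (A ∩ {v | 0 < ⟪v, θ⟫})).toReal) ∧
      Tendsto (fun z => tailFrac P x ({ω | y ω = -1} ∩ dirTail x A z) z) atTop
        (𝓝 (μ (A ∩ {v | ⟪v, θ⟫ < 0})).toReal) := by
  have hsum : Tendsto (fun z => tailFrac P x ({ω | y ω = 1} ∩ dirTail x A z) z +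
      tailFrac P x ({ω | y ω = -1} ∩ dirTail x A z) z) atTop
      (𝓝 ((μ (A ∩ {v | 0 < ⟪v, θ⟫})).toReal + (μ (A ∩ {v | ⟪v, θ⟫ < 0})).toReal)) := by
    rw [← ENNReal.toReal_add (measure_ne_top _ _) (measure_ne_top _ _),
      ← measure_eq_inter_pos_add_inter_neg (by fun_prop) hμθ]
    refine (hμ A hA hfA).congr fun z => ?_
    rw [tailFrac, tailFrac, tailFrac, ← add_div,
      ← measureReal_eq_add_of_ae_eq_one_or_neg_one hym hy]
  have hpos (a : ℝ) (ha : a < (μ (A ∩ {v | 0 < ⟪v, θ⟫})).toReal) :=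
    h.eventually_lt_tailFrac hx hμ hA hfA ha
  have hneg (b : ℝ) (hb : b < (μ (A ∩ {v | ⟪v, θ⟫ < 0})).toReal) :=
    (h.label_neg_one hx hym hy).eventually_lt_tailFrac hx hμ hA hfA
      (by simpa only [inner_neg_right, neg_pos] using hb)
  exact ⟨tendsto_of_tendsto_add_of_forall_lt hsum hpos hneg,
    tendsto_of_tendsto_add_of_forall_lt (by simpa only [add_comm] using hsum) hneg hpos⟩

end DirectionalTails

section LogisticNegTail

variable {Ω E : Type*} [NormedAddCommGroup E] [InnerProductSpace ℝ E]

def logisticNegTail (θ : E) (z : ℝ) : Set E :=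
  {h | logisticSigma ⟪h, θ⟫ * ‖h‖ > z ∧ ⟪h, θ⟫ < 0} ∩ {h | ‖h‖ > z}

lemma logisticNegTail_subset_dirTail (θ : E) (z : ℝ) :
    logisticNegTail θ z ⊆ dirTail id {v | 0 < -⟪v, θ⟫} z := by
  rintro h ⟨⟨-, hneg⟩, hz⟩
  refine ⟨?_, hz⟩
  change 0 < -⟪‖h‖⁻¹ • h, θ⟫
  rw [inner_eq_norm_mul_inner_smul] at hneg
  exact neg_pos.2 (neg_of_mul_neg_right hneg (norm_nonneg h))

lemma dirTail_subset_logisticNegTail {θ : E} {c η z : ℝ} (hc : 0 < c) (hη : 0 < η) (hz : 0 ≤ z)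
    (hexp : Real.exp (-(c * z)) ≤ η) :
    dirTail id {v | c < -⟪v, θ⟫} ((1 + η) * z) ⊆ logisticNegTail θ z := by
  rintro h ⟨hdir, hnorm⟩
  change c < -⟪‖h‖⁻¹ • h, θ⟫ at hdir
  change (1 + η) * z < ‖h‖ at hnorm
  have hzh : z < ‖h‖ := by nlinarith
  have hinner : ⟪h, θ⟫ < -(c * z) := by
    rw [inner_eq_norm_mul_inner_smul]
    nlinarith
  have hσ : 1 / (1 + η) ≤ logisticSigma ⟪h, θ⟫ := calc
    1 / (1 + η) ≤ 1 / (1 + Real.exp (-(c * z))) := by gcongr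
    _ = logisticSigma (-(c * z)) := (logisticSigma_eq_one_div _).symm
    _ ≤ logisticSigma ⟪h, θ⟫ := logisticSigma_antitone hinner.le
  refine ⟨⟨?_, hinner.trans_le (by nlinarith)⟩, hzh⟩
  calc z < 1 / (1 + η) * ‖h‖ := by
        rw [one_div_mul_eq_div, lt_div_iff₀ (by linarith)]
        linarith
    _ ≤ logisticSigma ⟪h, θ⟫ * ‖h‖ := by gcongr

lemma neg_mem_dirTail_id_iff {v θ : E} {c z : ℝ} :
    -v ∈ dirTail id {w | c < -⟪w, θ⟫} z ↔ v ∈ dirTail id {w | c < ⟪w, θ⟫} z := by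
  simp [dirTail, norm_neg, smul_neg, inner_neg_left]

variable {x : Ω → E} {y : Ω → ℝ}

lemma label_dirTail_union_subset_preimage_logisticNegTail {θ : E} {c η z : ℝ} (hc : 0 < c)
    (hη : 0 < η) (hz : 0 ≤ z) (hexp : Real.exp (-(c * z)) ≤ η) :
    {ω | y ω = 1} ∩ dirTail x {v | c < -⟪v, θ⟫} ((1 + η) * z) ∪
        {ω | y ω = -1} ∩ dirTail x {v | c < ⟪v, θ⟫} ((1 + η) * z) ⊆
      (fun ω => y ω • x ω) ⁻¹' logisticNegTail θ z := by
  have hsub := dirTail_subset_logisticNegTail (θ := θ) hc hη hz hexp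
  rintro ω (⟨hyω, hω⟩ | ⟨hyω, hω⟩) <;> rw [mem_ofPred_eq] at hyω <;> rw [mem_preimage, hyω]
  · rw [one_smul]
    exact hsub hω
  · rw [neg_one_smul]
    exact hsub (neg_mem_dirTail_id_iff.2 hω)

variable [MeasurableSpace Ω] {P : Measure Ω} [IsFiniteMeasure P]

lemma tailFrac_preimage_logisticNegTail_le (hym : Measurable y)
    (hy : ∀ᵐ ω ∂P, y ω = 1 ∨ y ω = -1) (θ : E) (z : ℝ) :
    tailFrac P x ((fun ω => y ω • x ω) ⁻¹' logisticNegTail θ z) z ≤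
      tailFrac P x ({ω | y ω = 1} ∩ dirTail x {v | 0 < -⟪v, θ⟫} z) z +
        tailFrac P x ({ω | y ω = -1} ∩ dirTail x {v | 0 < ⟪v, θ⟫} z) z := by
  rw [tailFrac, measureReal_eq_add_of_ae_eq_one_or_neg_one hym hy, add_div]
  refine add_le_add (tailFrac_mono ?_ z) (tailFrac_mono ?_ z) <;>
    rintro ω ⟨hyω, hω⟩ <;> rw [mem_ofPred_eq] at hyω <;> rw [mem_preimage, hyω] at hω
  · rw [one_smul] at hω
    exact ⟨hyω, logisticNegTail_subset_dirTail θ z hω⟩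
  · rw [neg_one_smul] at hω
    exact ⟨hyω, neg_mem_dirTail_id_iff.1 (logisticNegTail_subset_dirTail θ z hω)⟩

end LogisticNegTail

section NegativePartLimit

variable {Ω E : Type*} [MeasurableSpace Ω] [NormedAddCommGroup E] [InnerProductSpace ℝ E]
  [MeasurableSpace E] [BorelSpace E] {P : Measure Ω} [IsFiniteMeasure P] {x : Ω → E}
  {y : Ω → ℝ} {μ : Measure E} [IsFiniteMeasure μ] {θ θstar : E}

lemma eventually_tailFrac_preimage_logisticNegTail_lt (hx : Measurable x) (hym : Measurable y)
    (hy : ∀ᵐ ω ∂P, y ω = 1 ∨ y ω = -1) (hcond : HasLogisticCondProb P x {ω | y ω = 1} θstar)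
    (hμ : HasSpectralMeasure P x μ) (hμθ : μ {v | ⟪v, θ⟫ = 0} = 0)
    (hμθs : μ {v | ⟪v, θstar⟫ = 0} = 0) {b : ℝ}
    (hb : (μ ({v | 0 < -⟪v, θ⟫} ∩ {v | 0 < ⟪v, θstar⟫})).toReal +
      (μ ({v | 0 < ⟪v, θ⟫} ∩ {v | ⟪v, θstar⟫ < 0})).toReal < b) :
    ∀ᶠ z in atTop, tailFrac P x ((fun ω => y ω • x ω) ⁻¹' logisticNegTail θ z) z < b := by
  have hθ : Continuous fun v : E => ⟪v, θ⟫ := by fun_prop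
  have hθ' : Continuous fun v : E => -⟪v, θ⟫ := by fun_prop
  have hpos := tendsto_tailFrac_label hx hym hy hcond hμ hμθs
    (measurableSet_lt measurable_const hθ'.measurable)
    (measure_frontier_setOf_lt_eq_zero (c := 0) hθ' (by simpa only [neg_eq_zero] using hμθ))
  have hneg := tendsto_tailFrac_label hx hym hy hcond hμ hμθs
    (measurableSet_lt measurable_const hθ.measurable) (measure_frontier_setOf_lt_eq_zero hθ hμθ)
  filter_upwards [(hpos.1.add hneg.2).eventually_lt_const hb] with z hz
  exact (tailFrac_preimage_logisticNegTail_le hym hy θ z).trans_lt hz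

lemma tendsto_tailFrac_label_dirTail_union (hx : Measurable x) (hym : Measurable y)
    (hy : ∀ᵐ ω ∂P, y ω = 1 ∨ y ω = -1) (hcond : HasLogisticCondProb P x {ω | y ω = 1} θstar)
    (hμ : HasSpectralMeasure P x μ) (hμθs : μ {v | ⟪v, θstar⟫ = 0} = 0) {c t α : ℝ}
    (hc₁ : μ {v | -⟪v, θ⟫ = c} = 0) (hc₂ : μ {v | ⟪v, θ⟫ = c} = 0) (ht : 0 < t)
    (hreg : Tendsto (fun z => (P {ω | ‖x ω‖ > t * z}).toReal / (P {ω | ‖x ω‖ > z}).toReal)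
      atTop (𝓝 (t ^ (-α)))) :
    Tendsto (fun z => tailFrac P x ({ω | y ω = 1} ∩ dirTail x {v | c < -⟪v, θ⟫} (t * z) ∪
        {ω | y ω = -1} ∩ dirTail x {v | c < ⟪v, θ⟫} (t * z)) z) atTop
      (𝓝 (((μ ({v | c < -⟪v, θ⟫} ∩ {v | 0 < ⟪v, θstar⟫})).toReal +
        (μ ({v | c < ⟪v, θ⟫} ∩ {v | ⟪v, θstar⟫ < 0})).toReal) * t ^ (-α))) := by
  have hθ : Continuous fun v : E => ⟪v, θ⟫ := by fun_prop
  have hθ' : Continuous fun v : E => -⟪v, θ⟫ := by fun_prop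
  have h₁ := tendsto_tailFrac_label hx hym hy hcond hμ hμθs
    (measurableSet_lt measurable_const hθ'.measurable) (measure_frontier_setOf_lt_eq_zero hθ' hc₁)
  have h₂ := tendsto_tailFrac_label hx hym hy hcond hμ hμθs
    (measurableSet_lt measurable_const hθ.measurable) (measure_frontier_setOf_lt_eq_zero hθ hc₂)
  have hdisj : Disjoint {ω | y ω = 1} {ω | y ω = -1} :=
    disjoint_left.2 fun ω (h₁ : y ω = 1) (h₂ : y ω = -1) => by linarith
  refine tendsto_tailFrac_comp_const_mul (S := fun s => {ω | y ω = 1} ∩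
    dirTail x {v | c < -⟪v, θ⟫} s ∪ {ω | y ω = -1} ∩ dirTail x {v | c < ⟪v, θ⟫} s)
    (fun s => ?_) ht ((h₁.1.add h₂.2).congr fun s => ?_) hreg
  · exact union_subset (inter_subset_right.trans inter_subset_right)
      (inter_subset_right.trans inter_subset_right)
  · exact (tailFrac_union (hdisj.mono inter_subset_left inter_subset_left)
      ((hym (measurableSet_singleton _)).inter (measurableSet_dirTail hx
        (measurableSet_lt measurable_const hθ.measurable) s)) s).symm

lemma eventually_lt_tailFrac_preimage_logisticNegTail (hx : Measurable x) (hym : Measurable y)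
    (hy : ∀ᵐ ω ∂P, y ω = 1 ∨ y ω = -1) (hcond : HasLogisticCondProb P x {ω | y ω = 1} θstar)
    (hμ : HasSpectralMeasure P x μ) (hμθs : μ {v | ⟪v, θstar⟫ = 0} = 0) {α : ℝ}
    (hreg : ∀ t : ℝ, 0 < t →
      Tendsto (fun z => (P {ω | ‖x ω‖ > t * z}).toReal / (P {ω | ‖x ω‖ > z}).toReal)
        atTop (𝓝 (t ^ (-α)))) {a : ℝ}
    (ha : a < (μ ({v | 0 < -⟪v, θ⟫} ∩ {v | 0 < ⟪v, θstar⟫})).toReal +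
      (μ ({v | 0 < ⟪v, θ⟫} ∩ {v | ⟪v, θstar⟫ < 0})).toReal) :
    ∀ᶠ z in atTop, a < tailFrac P x ((fun ω => y ω • x ω) ⁻¹' logisticNegTail θ z) z := by
  have hθ : Measurable fun v : E => ⟪v, θ⟫ := by fun_prop
  have hm (F : E → ℝ) (S : Set E) : Tendsto (fun c => (μ ({v | c < F v} ∩ S)).toReal)
      (𝓝[>] 0) (𝓝 (μ ({v | 0 < F v} ∩ S)).toReal) := by
    simpa only [inter_comm S, Function.comp_def] using
      (ENNReal.tendsto_toReal (measure_ne_top _ _)).comp (tendsto_measure_inter_lt_nhdsGT μ S F 0)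
  obtain ⟨c, ⟨hc₁, hc₂⟩, hca, hc⟩ : ∃ c, (μ {v | -⟪v, θ⟫ = c} = 0 ∧ μ {v | ⟪v, θ⟫ = c} = 0) ∧
      a < (μ ({v | c < -⟪v, θ⟫} ∩ {v | 0 < ⟪v, θstar⟫})).toReal +
        (μ ({v | c < ⟪v, θ⟫} ∩ {v | ⟪v, θstar⟫ < 0})).toReal ∧ 0 < c :=
    ((eventually_cocountable_measure_eq_zero hθ.neg).and
      (eventually_cocountable_measure_eq_zero hθ)).frequently_nhdsGT_of_cocountable 0
      |>.and_eventually ((((hm _ _).add (hm _ _)).eventually_const_lt ha).and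
        self_mem_nhdsWithin) |>.exists
  have hpow : Tendsto (fun η : ℝ => (1 + η) ^ (-α)) (𝓝[>] 0) (𝓝 1) := by
    simpa using (((continuous_const.add continuous_id).tendsto (0 : ℝ)).rpow_const
      (Or.inl (by norm_num : (1 : ℝ) + 0 ≠ 0))).mono_left (nhdsWithin_le_nhds (s := Ioi 0))
  obtain ⟨η, hηa, hη⟩ := ((((hpow.const_mul _).eventually_const_lt (by simpa using hca)).and
    self_mem_nhdsWithin).exists)
  have hexp : ∀ᶠ z in atTop, Real.exp (-(c * z)) < η :=
    (Real.tendsto_exp_neg_atTop_nhds_zero.comp (tendsto_id.const_mul_atTop hc)).eventually_lt_const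
      hη
  filter_upwards [(tendsto_tailFrac_label_dirTail_union hx hym hy hcond hμ hμθs hc₁ hc₂
    (by linarith : (0 : ℝ) < 1 + η) (hreg _ (by linarith))).eventually_const_lt hηa,
    eventually_ge_atTop 0, hexp] with z hz hz₀ hexpz
  exact hz.trans_le (tailFrac_mono
    (label_dirTail_union_subset_preimage_logisticNegTail hc hη hz₀ hexpz.le) z)

end NegativePartLimit

lemma nuMeas_setOf_inner_pos {d : ℕ} (μ : Measure (EuclideanSpace ℝ (Fin d)))
    (θstar θ : EuclideanSpace ℝ (Fin d)) :
    nuMeas μ θstar {v | 0 < ⟪v, θ⟫} = μ ({v | 0 < -⟪v, θ⟫} ∩ {v | 0 < ⟪v, θstar⟫}) +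
      μ ({v | 0 < ⟪v, θ⟫} ∩ {v | ⟪v, θstar⟫ < 0}) := by
  simp only [nuMeas, preimage_ofPred_eq, inner_neg_left]

theorem logistic_sigma_tail_neg_part_general
    {d : ℕ} {Ω : Type*} [MeasurableSpace Ω] (P : Measure Ω) [IsProbabilityMeasure P]
    (x : Ω → EuclideanSpace ℝ (Fin d)) (y : Ω → ℝ)
    (hxmeas : Measurable x) (hymeas : Measurable y)
    (hy : ∀ᵐ ω ∂P, y ω = 1 ∨ y ω = -1)
    (θstar : EuclideanSpace ℝ (Fin d))
    (hcond : ∀ S : Set (EuclideanSpace ℝ (Fin d)), MeasurableSet S →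
        (P ({ω | y ω = 1} ∩ x ⁻¹' S)).toReal
          = ∫ ω in x ⁻¹' S, 1 / (1 + Real.exp (-(inner ℝ (x ω) θstar : ℝ))) ∂P)
    (α : ℝ)
    (hreg : ∀ t : ℝ, 0 < t →
        Tendsto (fun z : ℝ => (P {ω | ‖x ω‖ > t * z}).toReal / (P {ω | ‖x ω‖ > z}).toReal)
          atTop (𝓝 (t ^ (-α))))
    (μ : Measure (EuclideanSpace ℝ (Fin d))) [IsProbabilityMeasure μ]
    (hang : ∀ A : Set (EuclideanSpace ℝ (Fin d)), MeasurableSet A → μ (frontier A) = 0 →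
        Tendsto (fun z : ℝ =>
            (P ({ω | (‖x ω‖)⁻¹ • x ω ∈ A} ∩ {ω | ‖x ω‖ > z})).toReal /
              (P {ω | ‖x ω‖ > z}).toReal)
          atTop (𝓝 (μ A).toReal))
    (θ : EuclideanSpace ℝ (Fin d))
    (hμθ : μ {v | (inner ℝ v θ : ℝ) = 0} = 0)
    (hμθs : μ {v | (inner ℝ v θstar : ℝ) = 0} = 0) :
    Tendsto (fun z : ℝ =>
        (P ({ω | logisticSigma (inner ℝ (y ω • x ω) θ : ℝ) * ‖y ω • x ω‖ > z ∧
              (inner ℝ (y ω • x ω) θ : ℝ) < 0} ∩ {ω | ‖y ω • x ω‖ > z})).toReal /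
          (P {ω | ‖y ω • x ω‖ > z}).toReal)
      atTop (𝓝 ((nuMeas μ θstar {v | 0 < (inner ℝ v θ : ℝ)}).toReal)) := by
  have hnorm (z : ℝ) : P {ω | ‖y ω • x ω‖ > z} = P {ω | ‖x ω‖ > z} := by
    refine measure_congr (eventuallyEq_set.2 ?_)
    filter_upwards [hy] with ω hω
    rcases hω with h | h <;> simp [h]
  simp only [hnorm]
  rw [nuMeas_setOf_inner_pos, ENNReal.toReal_add (measure_ne_top _ _) (measure_ne_top _ _)]
  exact tendsto_order.2
    ⟨fun a ha => eventually_lt_tailFrac_preimage_logisticNegTail hxmeas hymeas hy hcond hang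
      hμθs hreg ha,
    fun b hb => eventually_tailFrac_preimage_logisticNegTail_lt hxmeas hymeas hy hcond hang hμθ
      hμθs hb⟩

/-- `lim_{z→∞} P(σ(h^⊤θ)·‖h‖ > z and h^⊤θ < 0 | ‖h‖ > z) = ν({ω : ω^⊤θ > 0})`. -/
theorem logistic_sigma_tail_neg_part
    {d : ℕ} {Ω : Type*} [MeasurableSpace Ω] (P : Measure Ω) [IsProbabilityMeasure P]
    (x : Ω → EuclideanSpace ℝ (Fin d)) (y : Ω → ℝ)
    (hxmeas : Measurable x) (hymeas : Measurable y)
    (hy : ∀ᵐ ω ∂P, y ω = 1 ∨ y ω = -1)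
    (θstar : EuclideanSpace ℝ (Fin d))
    (hcond : ∀ S : Set (EuclideanSpace ℝ (Fin d)), MeasurableSet S →
        (P ({ω | y ω = 1} ∩ x ⁻¹' S)).toReal
          = ∫ ω in x ⁻¹' S, 1 / (1 + Real.exp (-(inner ℝ (x ω) θstar : ℝ))) ∂P)
    (α : ℝ) (hα : α ∈ Set.Ioo (1:ℝ) 2)
    (hxpos : ∀ z : ℝ, 0 < P {ω | ‖x ω‖ > z})
    (hreg : ∀ t : ℝ, 0 < t →
        Tendsto (fun z : ℝ => (P {ω | ‖x ω‖ > t * z}).toReal / (P {ω | ‖x ω‖ > z}).toReal)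
          atTop (𝓝 (t ^ (-α))))
    (μ : Measure (EuclideanSpace ℝ (Fin d))) [IsProbabilityMeasure μ]
    (hμsphere : μ {v | ‖v‖ = 1}ᶜ = 0)
    (hang : ∀ A : Set (EuclideanSpace ℝ (Fin d)), MeasurableSet A → μ (frontier A) = 0 →
        Tendsto (fun z : ℝ =>
            (P ({ω | (‖x ω‖)⁻¹ • x ω ∈ A} ∩ {ω | ‖x ω‖ > z})).toReal /
              (P {ω | ‖x ω‖ > z}).toReal)
          atTop (𝓝 (μ A).toReal))
    (β1 β2 : ℝ) (hβ1 : 0 < β1) (hβ2 : 0 < β2)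
    (hint1 : ∫⁻ v in {v | 0 < (inner ℝ v θstar : ℝ)},
        ENNReal.ofReal ((inner ℝ v θstar : ℝ) ^ (-β1)) ∂μ < ⊤)
    (hint2 : ∫⁻ v in {v | (inner ℝ v θstar : ℝ) < 0},
        ENNReal.ofReal ((-(inner ℝ v θstar : ℝ)) ^ (-β2)) ∂μ < ⊤)
    (θ : EuclideanSpace ℝ (Fin d)) (hθ : θ ≠ 0)
    (hμθ : μ {v | (inner ℝ v θ : ℝ) = 0} = 0)
    (hμθs : μ {v | (inner ℝ v θstar : ℝ) = 0} = 0) :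
    Tendsto (fun z : ℝ =>
        (P ({ω | logisticSigma (inner ℝ (y ω • x ω) θ : ℝ) * ‖y ω • x ω‖ > z ∧
              (inner ℝ (y ω • x ω) θ : ℝ) < 0} ∩ {ω | ‖y ω • x ω‖ > z})).toReal /
          (P {ω | ‖y ω • x ω‖ > z}).toReal)
      atTop (𝓝 ((nuMeas μ θstar {v | 0 < (inner ℝ v θ : ℝ)}).toReal)) :=
  logistic_sigma_tail_neg_part_general P x y hxmeas hymeas hy θstar hcond α hreg μ hang θ hμθ hμθs
end

section
/- Fix θ ∈ ℝ^d with θ ≠ 0 and assume μ({ω ∈ S^{d−1} : ω^⊤θ = 0}) = 0 and μ({ω ∈ S^{d−1} : ω^⊤θ* = 0}) = 0. Then lim_{z→∞} P( σ(h^⊤θ)·‖h‖ > z and h^⊤θ > 0 | ‖h‖ > z ) = 0. -/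
open MeasureTheory ProbabilityTheory Filter Topology Set

/-! On `{⟪h, θ⟫ > 0}` we have `σ(⟪h, θ⟫) ‖h‖ ≤ ‖h‖ e^{-⟪h, θ⟫}`, and `t e^{-ct} ≤ 1/(ce)`. Hence, once
`z > 1/(ce)`, the event forces the direction `x/‖x‖` into the slab `{|⟪ω, θ⟫| ≤ c}`, whose limiting
conditional probability given `‖x‖ > z` is its `μ`-mass. As `μ(θ⊥) = 0`, that mass tends to `0`
with `c`, and `c` can be chosen with a `μ`-null frontier since only countably many level sets of
`|⟪·, θ⟫|` carry mass. -/

open scoped RealInnerProductSpace ENNReal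

lemma logisticSigma_le_exp_neg (u : ℝ) : logisticSigma u ≤ Real.exp (-u) :=
  div_le_self (Real.exp_pos _).le (by linarith [Real.exp_pos (-u)])

lemma mul_exp_neg_mul_le {c : ℝ} (hc : 0 < c) (t : ℝ) :
    t * Real.exp (-(c * t)) ≤ (c * Real.exp 1)⁻¹ := by
  have key : c * t * Real.exp 1 ≤ Real.exp (c * t) := by
    have h := Real.add_one_le_exp (c * t - 1)
    rwa [sub_add_cancel, Real.exp_sub, le_div_iff₀ (Real.exp_pos 1)] at h
  rw [Real.exp_neg, ← div_eq_mul_inv, div_le_iff₀ (Real.exp_pos _), inv_mul_eq_div,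
    le_div_iff₀ (by positivity)]
  linarith

section InnerProductSpace

variable {E : Type*} [NormedAddCommGroup E] [InnerProductSpace ℝ E]

lemma abs_inner_normalize_le_of_lt_logisticSigma_mul_norm {c z : ℝ} (hc : 0 < c)
    (hz : (c * Real.exp 1)⁻¹ < z) {v θ : E} (hpos : 0 < ⟪v, θ⟫)
    (hσ : z < logisticSigma ⟪v, θ⟫ * ‖v‖) : |⟪‖v‖⁻¹ • v, θ⟫| ≤ c := by
  by_contra! hfar
  have hv : 0 < ‖v‖ := norm_pos_iff.2 (by rintro rfl; simp at hpos)
  have hcv : c * ‖v‖ < ⟪v, θ⟫ := by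
    rwa [real_inner_smul_left, abs_mul, abs_inv, abs_norm, abs_of_pos hpos, inv_mul_eq_div,
      lt_div_iff₀ hv] at hfar
  have hσle : logisticSigma ⟪v, θ⟫ ≤ Real.exp (-(c * ‖v‖)) :=
    (logisticSigma_le_exp_neg _).trans (Real.exp_le_exp.2 (by linarith))
  have hbound : logisticSigma ⟪v, θ⟫ * ‖v‖ ≤ (c * Real.exp 1)⁻¹ := calc
    _ ≤ Real.exp (-(c * ‖v‖)) * ‖v‖ := by gcongr
    _ = ‖v‖ * Real.exp (-(c * ‖v‖)) := mul_comm _ _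
    _ ≤ _ := mul_exp_neg_mul_le hc ‖v‖
  linarith

lemma abs_inner_normalize_smul_of_abs_eq_one {y : ℝ} (hy : |y| = 1) (x θ : E) :
    |⟪‖y • x‖⁻¹ • (y • x), θ⟫| = |⟪‖x‖⁻¹ • x, θ⟫| := by
  rw [norm_smul, Real.norm_eq_abs, hy, one_mul, smul_comm, real_inner_smul_left, abs_mul, hy,
    one_mul]

end InnerProductSpace

section LevelSets

variable {X : Type*} [MeasurableSpace X] (μ : Measure X) [IsFiniteMeasure μ] {f : X → ℝ}

lemma tendsto_measure_abs_le_nhdsGT_zero (hf : Measurable f) :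
    Tendsto (fun c => μ {x | |f x| ≤ c}) (𝓝[>] 0) (𝓝 (μ {x | f x = 0})) := by
  have h := tendsto_measure_biInter_gt (μ := μ) (s := fun c => {x | |f x| ≤ c}) (a := 0)
    (fun _ _ => (measurableSet_le hf.abs measurable_const).nullMeasurableSet)
    (fun _ _ _ hij _ hx => le_trans hx hij) ⟨1, one_pos, measure_ne_top _ _⟩
  have hzero : ⋂ r > (0 : ℝ), {x | |f x| ≤ r} = {x | f x = 0} := by
    ext x
    simp only [mem_iInter, mem_ofPred_eq]
    exact ⟨fun h => abs_nonpos_iff.1 (forall_gt_imp_ge_iff_le_of_dense.1 h),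
      fun h r hr => by simp [h, hr.le]⟩
  rwa [hzero] at h

lemma exists_pos_measure_frontier_abs_le_eq_zero_and_lt [TopologicalSpace X]
    [OpensMeasurableSpace X] (hf : Continuous f) (h0 : μ {x | f x = 0} = 0) {ε : ℝ≥0∞}
    (hε : 0 < ε) :
    ∃ c > 0, μ (frontier {x | |f x| ≤ c}) = 0 ∧ μ {x | |f x| ≤ c} < ε := by
  obtain ⟨c₀, hc₀, hsmall⟩ := mem_nhdsGT_iff_exists_Ioo_subset.1
    ((tendsto_measure_abs_le_nhdsGT_zero μ hf.measurable).eventually_lt_const (h0 ▸ hε))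
  have hlevels := Measure.countable_meas_level_set_pos (μ := μ) hf.abs.measurable
  obtain ⟨c, hnull, hc⟩ := (hlevels.dense_compl ℝ).exists_between hc₀
  refine ⟨c, hc.1, measure_mono_null (frontier_le_subset_eq hf.abs continuous_const) ?_,
    hsmall hc⟩
  simpa using hnull

end LevelSets

section Sampling

variable {Ω E : Type*} [MeasurableSpace Ω] [NormedAddCommGroup E] [InnerProductSpace ℝ E]
  {P : Measure Ω} {x : Ω → E} {y : Ω → ℝ}

lemma measure_norm_smul_gt_eq (hy : ∀ᵐ ω ∂P, |y ω| = 1) (z : ℝ) :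
    P {ω | ‖y ω • x ω‖ > z} = P {ω | ‖x ω‖ > z} := by
  refine measure_congr (hy.mono fun ω hyω => ?_)
  change (‖y ω • x ω‖ > z) = (‖x ω‖ > z)
  rw [norm_smul, Real.norm_eq_abs, hyω, one_mul]

lemma measure_logisticSigma_tail_le_slab_tail (hy : ∀ᵐ ω ∂P, |y ω| = 1) {θ : E} {c z : ℝ}
    (hc : 0 < c) (hz : (c * Real.exp 1)⁻¹ < z) :
    P ({ω | logisticSigma ⟪y ω • x ω, θ⟫ * ‖y ω • x ω‖ > z ∧ 0 < ⟪y ω • x ω, θ⟫} ∩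
        {ω | ‖y ω • x ω‖ > z}) ≤
      P ({ω | ‖x ω‖⁻¹ • x ω ∈ {v | |⟪v, θ⟫| ≤ c}} ∩ {ω | ‖x ω‖ > z}) := by
  refine measure_mono_ae (hy.mono fun ω hyω ⟨⟨hσ, hpos⟩, hnorm⟩ => ⟨?_, ?_⟩)
  · change |⟪‖x ω‖⁻¹ • x ω, θ⟫| ≤ c
    rw [← abs_inner_normalize_smul_of_abs_eq_one hyω]
    exact abs_inner_normalize_le_of_lt_logisticSigma_mul_norm hc hz hpos hσ
  · simpa [norm_smul, hyω] using hnorm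

end Sampling

theorem logistic_sigma_tail_pos_part_general
    {d : ℕ} {Ω : Type*} [MeasurableSpace Ω] (P : Measure Ω) [IsProbabilityMeasure P]
    (x : Ω → EuclideanSpace ℝ (Fin d)) (y : Ω → ℝ)
    (hy : ∀ᵐ ω ∂P, y ω = 1 ∨ y ω = -1)
    (μ : Measure (EuclideanSpace ℝ (Fin d))) [IsProbabilityMeasure μ]
    (hang : ∀ A : Set (EuclideanSpace ℝ (Fin d)), MeasurableSet A → μ (frontier A) = 0 →
        Tendsto (fun z : ℝ =>
            (P ({ω | (‖x ω‖)⁻¹ • x ω ∈ A} ∩ {ω | ‖x ω‖ > z})).toReal /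
              (P {ω | ‖x ω‖ > z}).toReal)
          atTop (𝓝 (μ A).toReal))
    (θ : EuclideanSpace ℝ (Fin d))
    (hμθ : μ {v | (inner ℝ v θ : ℝ) = 0} = 0) :
    Tendsto (fun z : ℝ =>
        (P ({ω | logisticSigma (inner ℝ (y ω • x ω) θ : ℝ) * ‖y ω • x ω‖ > z ∧
              0 < (inner ℝ (y ω • x ω) θ : ℝ)} ∩ {ω | ‖y ω • x ω‖ > z})).toReal /
          (P {ω | ‖y ω • x ω‖ > z}).toReal)
      atTop (𝓝 0) := by
  rw [Metric.tendsto_nhds]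
  intro ε hε
  have hy' : ∀ᵐ ω ∂P, |y ω| = 1 := hy.mono fun ω h => (abs_eq zero_le_one).2 h
  obtain ⟨c, hc, hfrontier, hsmall⟩ := exists_pos_measure_frontier_abs_le_eq_zero_and_lt μ
    (f := fun v => ⟪v, θ⟫) (by fun_prop) hμθ (ENNReal.ofReal_pos.2 hε)
  have hslab := (hang {v | |⟪v, θ⟫| ≤ c} (measurableSet_le (by fun_prop) measurable_const)
    hfrontier).eventually_lt_const (ENNReal.toReal_lt_of_lt_ofReal hsmall)
  filter_upwards [hslab, eventually_gt_atTop (c * Real.exp 1)⁻¹] with z hslab hz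
  rw [Real.dist_0_eq_abs, abs_of_nonneg (by positivity), measure_norm_smul_gt_eq hy' z]
  calc _ ≤ _ := div_le_div_of_nonneg_right (ENNReal.toReal_mono (measure_ne_top _ _)
        (measure_logisticSigma_tail_le_slab_tail hy' hc hz)) ENNReal.toReal_nonneg
    _ < ε := hslab

/-- `lim_{z→∞} P(σ(h^⊤θ)·‖h‖ > z and h^⊤θ > 0 | ‖h‖ > z) = 0`. -/
theorem logistic_sigma_tail_pos_part
    {d : ℕ} {Ω : Type*} [MeasurableSpace Ω] (P : Measure Ω) [IsProbabilityMeasure P]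
    (x : Ω → EuclideanSpace ℝ (Fin d)) (y : Ω → ℝ)
    (hxmeas : Measurable x) (hymeas : Measurable y)
    (hy : ∀ᵐ ω ∂P, y ω = 1 ∨ y ω = -1)
    (θstar : EuclideanSpace ℝ (Fin d))
    (hcond : ∀ S : Set (EuclideanSpace ℝ (Fin d)), MeasurableSet S →
        (P ({ω | y ω = 1} ∩ x ⁻¹' S)).toReal
          = ∫ ω in x ⁻¹' S, 1 / (1 + Real.exp (-(inner ℝ (x ω) θstar : ℝ))) ∂P)
    (α : ℝ) (hα : α ∈ Set.Ioo (1:ℝ) 2)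
    (hxpos : ∀ z : ℝ, 0 < P {ω | ‖x ω‖ > z})
    (hreg : ∀ t : ℝ, 0 < t →
        Tendsto (fun z : ℝ => (P {ω | ‖x ω‖ > t * z}).toReal / (P {ω | ‖x ω‖ > z}).toReal)
          atTop (𝓝 (t ^ (-α))))
    (μ : Measure (EuclideanSpace ℝ (Fin d))) [IsProbabilityMeasure μ]
    (hμsphere : μ {v | ‖v‖ = 1}ᶜ = 0)
    (hang : ∀ A : Set (EuclideanSpace ℝ (Fin d)), MeasurableSet A → μ (frontier A) = 0 →
        Tendsto (fun z : ℝ =>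
            (P ({ω | (‖x ω‖)⁻¹ • x ω ∈ A} ∩ {ω | ‖x ω‖ > z})).toReal /
              (P {ω | ‖x ω‖ > z}).toReal)
          atTop (𝓝 (μ A).toReal))
    (β1 β2 : ℝ) (hβ1 : 0 < β1) (hβ2 : 0 < β2)
    (hint1 : ∫⁻ v in {v | 0 < (inner ℝ v θstar : ℝ)},
        ENNReal.ofReal ((inner ℝ v θstar : ℝ) ^ (-β1)) ∂μ < ⊤)
    (hint2 : ∫⁻ v in {v | (inner ℝ v θstar : ℝ) < 0},
        ENNReal.ofReal ((-(inner ℝ v θstar : ℝ)) ^ (-β2)) ∂μ < ⊤)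
    (θ : EuclideanSpace ℝ (Fin d)) (hθ : θ ≠ 0)
    (hμθ : μ {v | (inner ℝ v θ : ℝ) = 0} = 0)
    (hμθs : μ {v | (inner ℝ v θstar : ℝ) = 0} = 0) :
    Tendsto (fun z : ℝ =>
        (P ({ω | logisticSigma (inner ℝ (y ω • x ω) θ : ℝ) * ‖y ω • x ω‖ > z ∧
              0 < (inner ℝ (y ω • x ω) θ : ℝ)} ∩ {ω | ‖y ω • x ω‖ > z})).toReal /
          (P {ω | ‖y ω • x ω‖ > z}).toReal)
      atTop (𝓝 0) :=
  logistic_sigma_tail_pos_part_general P x y hy μ hang θ hμθ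
end
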